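/- arXiv:1308.3086 — 6 statements merged into one kernel-verified Lean document; each statement's English description precedes it below -/
import Mathlib

section
/- For a vector field X on E with ⟨X, dt⟩ = 1, the complete lift X̃ satisfies (i_{X̃} Θ) ∧ dt = −Θ, where Θ = p_i dq^i ∧ dt. -/
noncomputable section

open scoped BigOperators

/- Coordinate model for the paper "Lifting geometric objects to the dual of the
first jet bundle of a bundle fibred over ℝ".

`EE n` is the total space of `τ : E → ℝ`, with coordinates `(t, qⁱ)`.
`MM n` is `J¹τ* = T*E/⟨dt⟩`, with coordinates `(t, qⁱ, pᵢ)`.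
`TS n` is the extended dual `T*E`, with coordinates `(t, qⁱ, p₀, pᵢ)`.
Vector fields and 1-forms are given by their component functions (a vector
field on a vector space `V` is a map `V → V`, a covector field likewise via
the standard pairing). -/

abbrev EE (n : ℕ) : Type := ℝ × (Fin n → ℝ)
abbrev MM (n : ℕ) : Type := EE n × (Fin n → ℝ)
abbrev TS (n : ℕ) : Type := EE n × (ℝ × (Fin n → ℝ))

/-- the coordinate direction `∂/∂t` (equally, the covector `dt`) on `E` -/
def edt {n : ℕ} : EE n := (1, 0)
/-- the coordinate direction `∂/∂qⁱ` (equally, the covector `dqⁱ`) on `E` -/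
def eqv {n : ℕ} (i : Fin n) : EE n := (0, Pi.single i 1)

/-- pairing of a tangent vector and a covector on `E`, in coordinates -/
def pairE {n : ℕ} (u a : EE n) : ℝ := u.1 * a.1 + ∑ i, u.2 i * a.2 i

/-- pairing of a tangent vector and a covector on `J¹τ*`, in coordinates -/
def pairM {n : ℕ} (u a : MM n) : ℝ := pairE u.1 a.1 + ∑ i, u.2 i * a.2 i

/-- the fibre-linear function `F_X` on `J¹τ*` associated to a vertical vector
field `X = Xⁱ ∂/∂qⁱ` on `E`:  `F_X(t,q,p) = pᵢ Xⁱ(t,q)` -/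
def FX {n : ℕ} (X : EE n → EE n) : MM n → ℝ := fun m => ∑ i, m.2 i * (X m.1).2 i

/-- vertical lift `α^v = αᵢ ∂/∂pᵢ` of a 1-form `α` on `E` -/
def vlift1 {n : ℕ} (α : EE n → EE n) : MM n → MM n := fun m => ((0, 0), (α m.1).2)

/-- complete lift `X̃ = X⁰ ∂/∂t + Xⁱ ∂/∂qⁱ - p_j (∂X^j/∂qⁱ) ∂/∂pᵢ`
of a vector field `X` on `E` (for `X` vertical or with `⟨X,dt⟩ = 1`) -/
def clift {n : ℕ} (X : EE n → EE n) : MM n → MM n :=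
  fun m => (X m.1, fun i => - ∑ j, m.2 j * fderiv ℝ (fun e => (X e).2 j) m.1 (eqv i))

/-- Lie bracket of vector fields on a vector space -/
def vbracket {V : Type} [NormedAddCommGroup V] [NormedSpace ℝ V] (A B : V → V) : V → V :=
  fun x => fderiv ℝ B x (A x) - fderiv ℝ A x (B x)

/-- the canonical 2-form `Θ = pᵢ dqⁱ ∧ dt` on `J¹τ*` -/
def Theta {n : ℕ} (m u v : MM n) : ℝ :=
  ∑ i, m.2 i * (u.1.2 i * v.1.1 - v.1.2 i * u.1.1)

/-- Lie derivative of a 2-form `ω` along a vector field `V`,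
evaluated on constant vector fields `u`, `v` -/
def lieDer2 {n : ℕ} (V : MM n → MM n) (ω : MM n → MM n → MM n → ℝ) (m u v : MM n) : ℝ :=
  fderiv ℝ (fun x => ω x u v) m (V m) + ω m (fderiv ℝ V m u) v + ω m u (fderiv ℝ V m v)

/-- Lie derivative `L_X α` of a 1-form on `E`, as a covector field -/
def lieDer1 {n : ℕ} (X α : EE n → EE n) (e : EE n) : EE n :=
  (fderiv ℝ (fun x => pairE edt (α x)) e (X e) + pairE (fderiv ℝ X e edt) (α e),
   fun i => fderiv ℝ (fun x => pairE (eqv i) (α x)) e (X e) + pairE (fderiv ℝ X e (eqv i)) (α e))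

/-- Lie derivative `L_X S` of a type (1,1) tensor `S` along a vector field `X`,
evaluated on a constant vector field `u`:  `(L_X S)(u) = [X, S u] - S [X, u]` -/
def lieDerT {V : Type} [NormedAddCommGroup V] [NormedSpace ℝ V]
    (X : V → V) (S : V → V → V) : V → V → V :=
  fun x u => fderiv ℝ (fun y => S y u) x (X x) - fderiv ℝ X x (S x u) + S x (fderiv ℝ X x u)

/-- the Nijenhuis torsion `N_S(u,v) = [Su,Sv] + S²[u,v] - S[Su,v] - S[u,Sv]`
of a type (1,1) tensor `S`, evaluated on constant vector fields -/
def nijT {V : Type} [NormedAddCommGroup V] [NormedSpace ℝ V]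
    (S : V → V → V) (x u v : V) : V :=
  fderiv ℝ (fun y => S y v) x (S x u) - fderiv ℝ (fun y => S y u) x (S x v)
    + S x (fderiv ℝ (fun y => S y u) x v) - S x (fderiv ℝ (fun y => S y v) x u)

/-- adjoint action `S(α)`, `⟨u, S(α)⟩ = ⟨S(u), α⟩`, of a (1,1) tensor on a 1-form -/
def adjS {n : ℕ} (S : EE n → EE n → EE n) (α : EE n → EE n) : EE n → EE n :=
  fun e => (pairE (S e edt) (α e), fun j => pairE (S e (eqv j)) (α e))

/-- vertical lift `S^v = pᵢ Sⁱ_j ∂/∂p_j` (a vector field on `J¹τ*`) of a (1,1) tensor -/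
def vlift11 {n : ℕ} (S : EE n → EE n → EE n) : MM n → MM n :=
  fun m => ((0, 0), fun j => ∑ i, m.2 i * (S m.1 (eqv j)).2 i)

/-- horizontal lift `S^h = pᵢ Sⁱ_j dq^j + pᵢ Sⁱ_0 dt` (a semi-basic 1-form on `J¹τ*`,
given as a covector field) of a (1,1) tensor -/
def hliftC {n : ℕ} (S : EE n → EE n → EE n) : MM n → MM n :=
  fun m => ((∑ i, m.2 i * (S m.1 edt).2 i, fun j => ∑ i, m.2 i * (S m.1 (eqv j)).2 i), 0)

/-- matrix entry `Sⁱ_j` of a (1,1) tensor on `E` -/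
def Rij {n : ℕ} (S : EE n → EE n → EE n) (i j : Fin n) (e : EE n) : ℝ := (S e (eqv j)).2 i
/-- matrix entry `Sⁱ_0` of a (1,1) tensor on `E` -/
def Ri0 {n : ℕ} (S : EE n → EE n → EE n) (i : Fin n) (e : EE n) : ℝ := (S e edt).2 i

/-- the complete lift `S̃` on `J¹τ*` of a (1,1) tensor `S` on `E` (with `S(dt) = 0`),
in coordinates:
`S̃ = Sⁱ_j (∂/∂qⁱ ⊗ dq^j + ∂/∂p_j ⊗ dpᵢ) + Sⁱ_0 ∂/∂qⁱ ⊗ dt`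
`  + pᵢ(∂Sⁱ_j/∂q^k − ∂Sⁱ_k/∂q^j) ∂/∂p_j ⊗ dq^k + pᵢ(∂Sⁱ_k/∂t − ∂Sⁱ_0/∂q^k) ∂/∂p_k ⊗ dt` -/
def tlift {n : ℕ} (S : EE n → EE n → EE n) : MM n → MM n → MM n :=
  fun m u =>
    ((0, fun i => (∑ j, Rij S i j m.1 * u.1.2 j) + Ri0 S i m.1 * u.1.1),
     fun j => (∑ i, Rij S i j m.1 * u.2 i)
       + (∑ k, (∑ i, m.2 i *
           (fderiv ℝ (Rij S i j) m.1 (eqv k) - fderiv ℝ (Rij S i k) m.1 (eqv j))) * u.1.2 k)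
       + (∑ i, m.2 i *
           (fderiv ℝ (Rij S i j) m.1 edt - fderiv ℝ (Ri0 S i) m.1 (eqv j))) * u.1.1)

/-- exterior derivative of a 1-form `α` on `E`, evaluated on constant vector fields -/
def dOne {n : ℕ} (α : EE n → EE n) (e a b : EE n) : ℝ :=
  fderiv ℝ (fun x => pairE b (α x)) e a - fderiv ℝ (fun x => pairE a (α x)) e b

/-- projection `ρ : T*E → J¹τ*` (forgetting `p₀`) -/
def rho {n : ℕ} (z : TS n) : MM n := (z.1, z.2.2)
/-- tangent map of `ρ` -/
def Trho {n : ℕ} (w : TS n) : MM n := (w.1, w.2.2)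

/-- the complete lift `S̃_{T*}` of a (1,1) tensor `S` (with `S(dt)=0`) to `T*E`:
the expression of `tlift` plus the extra terms
`Sⁱ_0 ∂/∂p₀ ⊗ dpᵢ + pᵢ(∂Sⁱ_0/∂q^k − ∂Sⁱ_k/∂t) ∂/∂p₀ ⊗ dq^k` -/
def tliftStar {n : ℕ} (S : EE n → EE n → EE n) : TS n → TS n → TS n :=
  fun z w =>
    ((0, fun i => (∑ j, Rij S i j z.1 * w.1.2 j) + Ri0 S i z.1 * w.1.1),
     ((∑ i, Ri0 S i z.1 * w.2.2 i)
        + ∑ k, (∑ i, z.2.2 i *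
            (fderiv ℝ (Ri0 S i) z.1 (eqv k) - fderiv ℝ (Rij S i k) z.1 edt)) * w.1.2 k,
      fun j => (tlift S (rho z) (Trho w)).2 j))

/-- Lie derivative of a 1-form `θ` on `J¹τ*` along a vector field `Z`, as covector field -/
def lieDer1M {n : ℕ} (Z θ : MM n → MM n) (m : MM n) : MM n :=
  ((fderiv ℝ (fun x => pairM ((edt : EE n), 0) (θ x)) m (Z m)
      + pairM (fderiv ℝ Z m ((edt : EE n), 0)) (θ m),
    fun i => fderiv ℝ (fun x => pairM ((eqv i : EE n), 0) (θ x)) m (Z m)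
      + pairM (fderiv ℝ Z m ((eqv i : EE n), 0)) (θ m)),
   fun i => fderiv ℝ (fun x => pairM (0, Pi.single i 1) (θ x)) m (Z m)
      + pairM (fderiv ℝ Z m (0, Pi.single i 1)) (θ m))

/-- adjoint action of a (1,1) tensor on `J¹τ*` on a 1-form `σ` -/
def adjM {n : ℕ} (T : MM n → MM n → MM n) (σ : MM n → MM n) : MM n → MM n :=
  fun m => ((pairM (T m ((edt : EE n), 0)) (σ m), fun i => pairM (T m ((eqv i : EE n), 0)) (σ m)),
            fun i => pairM (T m (0, Pi.single i 1)) (σ m))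

/-- the canonical Poisson map `P : Ω¹(J¹τ*) → X(J¹τ*)` of `Λ = ∂/∂qⁱ ∧ ∂/∂pᵢ`,
determined by `Λ(σ,τ) = ⟨P(σ), τ⟩` -/
def Pmap {n : ℕ} (σ : MM n → MM n) : MM n → MM n :=
  fun m => ((0, fun i => -(σ m).2 i), fun i => (σ m).1.2 i)

/-- the differential `dF_X` as a covector field on `J¹τ*` -/
def dFc {n : ℕ} (X : EE n → EE n) (m : MM n) : MM n :=
  ((fderiv ℝ (FX X) m ((edt : EE n), 0), fun i => fderiv ℝ (FX X) m ((eqv i : EE n), 0)),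
   fun i => fderiv ℝ (FX X) m (0, Pi.single i 1))

/-- `(i_w Θ) ∧ dt = -⟨w, dt⟩ Θ`, evaluated on `u`, `v`. -/
theorem Theta_interior_wedge_dt {n : ℕ} (m w u v : MM n) :
    Theta m w u * v.1.1 - Theta m w v * u.1.1 = -(w.1.1 * Theta m u v) := by
  simp only [Theta, Finset.sum_mul, Finset.mul_sum, ← Finset.sum_sub_distrib,
    ← Finset.sum_neg_distrib]
  exact Finset.sum_congr rfl fun i _ => by ring

theorem statement4_general {n : ℕ} (X : EE n → EE n)
    (hXt : ∀ e, (X e).1 = 1) :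
    ∀ m u v : MM n,
      Theta m (clift X m) u * v.1.1 - Theta m (clift X m) v * u.1.1 = - Theta m u v := by
  intro m u v
  have hdt : (clift X m).1.1 = 1 := hXt m.1
  rw [Theta_interior_wedge_dt, hdt, one_mul]

/-- For a vector field `X` on `E` with `⟨X,dt⟩ = 1`, the complete lift
`X̃` satisfies `(i_{X̃} Θ) ∧ dt = −Θ`. -/
theorem statement4 {n : ℕ} (X : EE n → EE n) (hX : ContDiff ℝ (⊤ : ℕ∞) X)
    (hXt : ∀ e, (X e).1 = 1) :
    ∀ m u v : MM n,
      Theta m (clift X m) u * v.1.1 - Theta m (clift X m) v * u.1.1 = - Theta m u v :=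
  statement4_general X hXt
end
end

section
/- For a 1-form α on E and a vector field X on E that is vertical or satisfies ⟨X,dt⟩ = 1, the Lie bracket of the complete lift X̃ and the vertical lift α^v satisfies [X̃, α^v] = (L_X α)^v. -/
noncomputable section

open scoped BigOperators

/- Both lifts are affine along the fibres of `J¹τ*`: `α^v` does not depend on `p`, and `X̃` is
linear in `p`. Hence `[X̃, α^v]` is vertical, with `i`-th component `Xαᵢ + αⱼ ∂Xʲ/∂qⁱ`, the second
term being minus the derivative of `X̃` along `α^v`. Because `⟨X, dt⟩` is constant, `DX` has no
`∂/∂t`-component, so `⟨DX(∂/∂qⁱ), α⟩ = αⱼ ∂Xʲ/∂qⁱ` and this is exactly `(L_X α)ᵢ`. -/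

open ContinuousLinearMap

section

variable {𝕜 E F G ι : Type*} [NontriviallyNormedField 𝕜] [NormedAddCommGroup E] [NormedSpace 𝕜 E]
  [NormedAddCommGroup F] [NormedSpace 𝕜 F] [NormedAddCommGroup G] [NormedSpace 𝕜 G] [Fintype ι]

theorem fderiv_fst_apply_eq_zero_of_fst_const {f : E → F × G} {c : F} (hf : ∀ x, (f x).1 = c)
    {x : E} (hfx : DifferentiableAt 𝕜 f x) (v : E) : (fderiv 𝕜 f x v).1 = 0 := by
  have h := fderiv.fst hfx
  rw [show (fun x => (f x).1) = fun _ => c from funext hf, fderiv_const_apply] at h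
  exact (DFunLike.congr_fun h v).symm

theorem fderiv_snd_apply_apply {f : E → F × (ι → G)} {x : E} (hfx : DifferentiableAt 𝕜 f x)
    (i : ι) (v : E) : fderiv 𝕜 (fun y => (f y).2 i) x v = (fderiv 𝕜 f x v).2 i := by
  rw [fderiv_apply hfx.snd i, fderiv.snd hfx]
  rfl

end

section

variable {n : ℕ}

theorem pairE_eqv (i : Fin n) (a : EE n) : pairE (eqv i) a = a.2 i := by
  simp [pairE, eqv, Pi.single_apply]

theorem fderiv_vlift1_apply {α : EE n → EE n} {m : MM n} (hα : DifferentiableAt ℝ α m.1)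
    (v : MM n) : fderiv ℝ (vlift1 α) m v = (0, (fderiv ℝ α m.1 v.1).2) := by
  have h : HasFDerivAt (vlift1 α) ((0 : MM n →L[ℝ] EE n).prod
      ((snd ℝ ℝ (Fin n → ℝ)).comp ((fderiv ℝ α m.1).comp (fst ℝ (EE n) (Fin n → ℝ))))) m :=
    (hasFDerivAt_const _ m).prodMk (hα.hasFDerivAt.comp m hasFDerivAt_fst).snd
  rw [h.fderiv]
  rfl

theorem contDiff_clift {X : EE n → EE n} {k : WithTop ℕ∞} (hX : ContDiff ℝ (k + 1) X) :
    ContDiff ℝ k (clift X) := by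
  have hXj : ∀ j : Fin n, ContDiff ℝ (k + 1) (fun e => (X e).2 j) := fun j =>
    (contDiff_apply ℝ ℝ j).comp hX.snd
  refine ((hX.of_le le_self_add).comp contDiff_fst).prodMk (contDiff_pi.2 fun i => ?_)
  refine ContDiff.neg (ContDiff.sum fun j _ => ?_)
  exact ((contDiff_apply ℝ ℝ j).comp contDiff_snd).mul
    ((((hXj j).fderiv_right le_rfl).clm_apply contDiff_const).comp contDiff_fst)

theorem fderiv_clift_apply_vertical {X : EE n → EE n} {m : MM n}
    (hX : DifferentiableAt ℝ (clift X) m) (w : Fin n → ℝ) :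
    fderiv ℝ (clift X) m (0, w) =
      (0, fun i => -∑ j, w j * fderiv ℝ (fun e => (X e).2 j) m.1 (eqv i)) := by
  obtain ⟨e, p⟩ := m
  have hfibre : HasFDerivAt (fun p => clift X (e, p))
      ((fderiv ℝ (clift X) (e, p)).comp (inr ℝ (EE n) (Fin n → ℝ))) p :=
    hX.hasFDerivAt.comp p (hasFDerivAt_prodMk_right e p)
  have hlin : HasFDerivAt (fun p : Fin n → ℝ =>
        (X e, fun i => -∑ j, p j * fderiv ℝ (fun e => (X e).2 j) e (eqv i)))
      ((0 : (Fin n → ℝ) →L[ℝ] EE n).prod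
        (pi fun i => -∑ j, fderiv ℝ (fun e => (X e).2 j) e (eqv i) • proj j)) p :=
    (hasFDerivAt_const _ _).prodMk (hasFDerivAt_pi.2 fun i =>
      (HasFDerivAt.fun_sum fun j _ => (hasFDerivAt_apply j p).mul_const _).neg)
  have h := DFunLike.congr_fun (hfibre.unique hlin) w
  simpa [mul_comm] using h

theorem vbracket_clift_vlift1 {α X : EE n → EE n} {m : MM n} (hα : DifferentiableAt ℝ α m.1)
    (hX : DifferentiableAt ℝ (clift X) m) :
    vbracket (clift X) (vlift1 α) m = (0, fun i => (fderiv ℝ α m.1 (X m.1)).2 i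
      + ∑ j, (α m.1).2 j * fderiv ℝ (fun e => (X e).2 j) m.1 (eqv i)) := by
  rw [vbracket, fderiv_vlift1_apply hα, vlift1, Prod.mk_zero_zero, fderiv_clift_apply_vertical hX]
  ext i <;> simp [clift]

theorem lieDer1_snd_of_fst_const {α X : EE n → EE n} {c : ℝ} (hXc : ∀ e, (X e).1 = c) {e : EE n}
    (hα : DifferentiableAt ℝ α e) (hX : DifferentiableAt ℝ X e) (i : Fin n) :
    (lieDer1 X α e).2 i = (fderiv ℝ α e (X e)).2 i
      + ∑ j, (α e).2 j * fderiv ℝ (fun x => (X x).2 j) e (eqv i) := by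
  simp only [lieDer1, pairE_eqv]
  rw [fderiv_snd_apply_apply hα]
  simp only [pairE, fderiv_fst_apply_eq_zero_of_fst_const hXc hX, mul_zero, zero_add,
    fderiv_snd_apply_apply hX, mul_comm]

end

theorem statement6_general {n : ℕ} (α X : EE n → EE n)
    (hα : ContDiff ℝ (⊤ : ℕ∞) α) (hX : ContDiff ℝ (⊤ : ℕ∞) X)
    (c : ℝ) (hXc : ∀ e, (X e).1 = c) :
    ∀ m : MM n, vbracket (clift X) (vlift1 α) m = vlift1 (lieDer1 X α) m := by
  intro m
  have hαd : Differentiable ℝ α := hα.differentiable (by simp)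
  have hXd : Differentiable ℝ X := hX.differentiable (by simp)
  have hcliftd : Differentiable ℝ (clift X) :=
    (contDiff_clift (k := 1) (hX.of_le (WithTop.coe_le_coe.2 le_top))).differentiable one_ne_zero
  rw [vbracket_clift_vlift1 (hαd m.1) (hcliftd m)]
  exact Prod.ext rfl (funext fun i => (lieDer1_snd_of_fst_const hXc (hαd m.1) (hXd m.1) i).symm)

/-- For a 1-form `α` on `E` and a vector field `X` on `E` that is
vertical or has `⟨X,dt⟩ = 1`, one has `[X̃, α^v] = (L_X α)^v`. -/
theorem statement6 {n : ℕ} (α X : EE n → EE n)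
    (hα : ContDiff ℝ (⊤ : ℕ∞) α) (hX : ContDiff ℝ (⊤ : ℕ∞) X)
    (c : ℝ) (hc : c = 0 ∨ c = 1) (hXc : ∀ e, (X e).1 = c) :
    ∀ m : MM n, vbracket (clift X) (vlift1 α) m = vlift1 (lieDer1 X α) m :=
  statement6_general α X hα hX c hXc
end
end

section
/- For f ∈ C^∞(E) and vertical X on E, the complete lift satisfies (fX)~ = f X̃ − F_X (df)^v, and the Lie derivative identity L_{fX} R = f L_X R − X ⊗ R(df) + R(X) ⊗ df holds for any (1,1) tensor R on E. -/
noncomputable section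

open scoped BigOperators

/-! Both identities are the Leibniz rule `d(fX) = f dX + df ⊗ X`. In the complete lift the
`df ⊗ X` term contributes `-pⱼ Xʲ ∂ᵢf = -F_X (df)ᵢ`; in `L_{fX} R` it contributes
`-⟨df, R u⟩ X` through `-d(fX)(R u)` and `⟨df, u⟩ R(X)` through `R(d(fX) u)`. -/

theorem fderiv_fun_smul_apply {𝕜 E F : Type*} [NontriviallyNormedField 𝕜]
    [NormedAddCommGroup E] [NormedSpace 𝕜 E] [NormedAddCommGroup F] [NormedSpace 𝕜 F]
    {f : E → 𝕜} {X : E → F} {x : E} (hf : DifferentiableAt 𝕜 f x)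
    (hX : DifferentiableAt 𝕜 X x) (u : E) :
    fderiv 𝕜 (fun y => f y • X y) x u = f x • fderiv 𝕜 X x u + fderiv 𝕜 f x u • X x := by
  simp [fderiv_fun_smul hf hX]

theorem lieDerT_smul {V : Type} [NormedAddCommGroup V] [NormedSpace ℝ V]
    {f : V → ℝ} {X : V → V} {R : V → V → V} {x : V} (hf : DifferentiableAt ℝ f x)
    (hX : DifferentiableAt ℝ X x) (hR : IsLinearMap ℝ (R x)) (u : V) :
    lieDerT (fun y => f y • X y) R x u
      = f x • lieDerT X R x u - fderiv ℝ f x (R x u) • X x + fderiv ℝ f x u • R x (X x) := by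
  simp only [lieDerT, fderiv_fun_smul_apply hf hX, (fderiv ℝ (fun y => R y u) x).map_smul,
    hR.map_add, hR.map_smul]
  module

theorem fderiv_snd_pi_apply {n : ℕ} {X : EE n → EE n} {e : EE n}
    (hX : DifferentiableAt ℝ X e) (j : Fin n) (v : EE n) :
    fderiv ℝ (fun y => (X y).2 j) e v = (fderiv ℝ X e v).2 j := by
  let L : EE n →L[ℝ] ℝ := (ContinuousLinearMap.proj j).comp (ContinuousLinearMap.snd ℝ _ _)
  change fderiv ℝ (L ∘ X) e v = L (fderiv ℝ X e v)
  rw [(L.hasFDerivAt.comp e hX.hasFDerivAt).fderiv]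
  rfl

theorem clift_smul {n : ℕ} {f : EE n → ℝ} {X : EE n → EE n} {m : MM n}
    (hf : DifferentiableAt ℝ f m.1) (hX : DifferentiableAt ℝ X m.1) :
    clift (fun e => f e • X e) m
      = f m.1 • clift X m
        - FX X m • vlift1 (fun e => (fderiv ℝ f e edt, fun i => fderiv ℝ f e (eqv i))) m := by
  refine Prod.ext (by simp [clift, vlift1, Prod.mk_zero_zero]) (funext fun i => ?_)
  have leibniz : ∀ j, fderiv ℝ (fun e => f e * (X e).2 j) m.1 (eqv i)
      = f m.1 * fderiv ℝ (fun e => (X e).2 j) m.1 (eqv i) + fderiv ℝ f m.1 (eqv i) * (X m.1).2 j :=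
    fun j => by
      change fderiv ℝ (fun e => (f e • X e).2 j) m.1 (eqv i) = _
      rw [fderiv_snd_pi_apply (X := fun e => f e • X e) (hf.smul hX), fderiv_snd_pi_apply hX,
        fderiv_fun_smul_apply hf hX]
      rfl
  simp only [clift, FX, vlift1, leibniz, Prod.snd_sub, Prod.smul_snd, Pi.sub_apply, Pi.smul_apply,
    smul_eq_mul, Finset.mul_sum, Finset.sum_mul, ← Finset.sum_neg_distrib, ← Finset.sum_sub_distrib]
  exact Finset.sum_congr rfl fun j _ => by ring

theorem statement11_general {n : ℕ} (f : EE n → ℝ) (X : EE n → EE n)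
    (hf : ContDiff ℝ (⊤ : ℕ∞) f) (hX : ContDiff ℝ (⊤ : ℕ∞) X)
    (R : EE n → EE n → EE n)
    (hRl : ∀ e, IsLinearMap ℝ (R e)) :
    (∀ m : MM n, clift (fun e => f e • X e) m
        = f m.1 • clift X m
          - FX X m • vlift1 (fun e => (fderiv ℝ f e edt, fun i => fderiv ℝ f e (eqv i))) m) ∧
    (∀ e u, lieDerT (fun x => f x • X x) R e u
        = f e • lieDerT X R e u - fderiv ℝ f e (R e u) • X e + fderiv ℝ f e u • R e (X e)) := by
  have hfd : Differentiable ℝ f := hf.differentiable (by simp)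
  have hXd : Differentiable ℝ X := hX.differentiable (by simp)
  exact ⟨fun m => clift_smul (hfd _) (hXd _),
    fun e u => lieDerT_smul (hfd e) (hXd e) (hRl e) u⟩

/-- For `f ∈ C^∞(E)` and vertical `X` on `E`:
`(fX)~ = f X̃ − F_X (df)^v`, and for any (1,1) tensor `R` on `E`:
`L_{fX} R = f L_X R − X ⊗ R(df) + R(X) ⊗ df`. -/
theorem statement11 {n : ℕ} (f : EE n → ℝ) (X : EE n → EE n)
    (hf : ContDiff ℝ (⊤ : ℕ∞) f) (hX : ContDiff ℝ (⊤ : ℕ∞) X) (hXv : ∀ e, (X e).1 = 0)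
    (R : EE n → EE n → EE n)
    (hRl : ∀ e, IsLinearMap ℝ (R e))
    (hRs : ∀ u, ContDiff ℝ (⊤ : ℕ∞) (fun e => R e u)) :
    (∀ m : MM n, clift (fun e => f e • X e) m
        = f m.1 • clift X m
          - FX X m • vlift1 (fun e => (fderiv ℝ f e edt, fun i => fderiv ℝ f e (eqv i))) m) ∧
    (∀ e u, lieDerT (fun x => f x • X x) R e u
        = f e • lieDerT X R e u - fderiv ℝ f e (R e u) • X e + fderiv ℝ f e u • R e (X e)) :=
  statement11_general f X hf hX R hRl
end
end

section
/- The adjoint (action on 1-forms) of the complete lift R̃ satisfies R̃(π*α) = π*(R(α)) for all 1-forms α on E, and R̃(dF_X) = dF_{R(X)} − (L_X R)^h for all vertical vector fields X on E, where (Q)^h = p_i Q^i_j dq^j + p_i Q^i_0 dt is the horizontal lift (a semi-basic 1-form on J¹τ*) of a (1,1) tensor Q with Q(dt)=0. -/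
noncomputable section

open scoped BigOperators

/-! Regard the linear field `R` as a family `S` of continuous linear maps with derivative `D = dS`.
Because `R` is vertical, the coordinate formula for `R̃` says invariantly that `R̃u` has base part
`S u` and that its fibre part, paired with a vertical `Z`, is `⟨u_p, S Z⟩ + ⟨p, D_u Z - D_Z u⟩`.
The first identity is then the defining property of the adjoint. For the second,
`dF_X(R̃u) = ⟨u_p, S X⟩ + ⟨p, D_u X - D_X u + dX (S u)⟩`, while the product rule gives
`dF_{R(X)}(u) = ⟨u_p, S X⟩ + ⟨p, S (dX u) + D_u X⟩` and `(L_X R) u = D_X u - dX (S u) + S (dX u)`. -/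

section CompleteLift

variable {n : ℕ}

lemma eq_smul_edt_add_sum_smul_eqv (w : EE n) : w = w.1 • (edt : EE n) + ∑ k, w.2 k • eqv k := by
  refine Prod.ext ?_ (funext fun l => ?_)
  · simp [edt, eqv, Prod.fst_sum]
  · simp [edt, eqv, Prod.snd_sum, Finset.sum_apply, Pi.single_apply]

lemma map_eq_smul_edt_add_sum {M F : Type*} [AddCommMonoid M] [Module ℝ M] [FunLike F (EE n) M]
    [LinearMapClass F ℝ (EE n) M] (f : F) (w : EE n) :
    f w = w.1 • f edt + ∑ k, w.2 k • f (eqv k) := by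
  conv_lhs => rw [eq_smul_edt_add_sum_smul_eqv w]
  simp only [map_add, map_sum, map_smul]

def fibrePair (p : Fin n → ℝ) : EE n →L[ℝ] ℝ :=
  ∑ i, p i • (ContinuousLinearMap.proj i).comp (ContinuousLinearMap.snd ℝ ℝ (Fin n → ℝ))

@[simp]
lemma fibrePair_apply (p : Fin n → ℝ) (z : EE n) : fibrePair p z = ∑ i, p i * z.2 i := by
  simp [fibrePair]

lemma tlift_fst (S : EE n → EE n →L[ℝ] EE n) (m u : MM n) (hS : ∀ v, (S m.1 v).1 = 0) :
    (tlift (fun e => S e) m u).1 = S m.1 u.1 := by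
  refine Prod.ext (hS u.1).symm (funext fun i => ?_)
  rw [map_eq_smul_edt_add_sum (S m.1) u.1]
  simp only [tlift, Rij, Ri0, Prod.snd_add, Prod.smul_snd, Prod.snd_sum, Finset.sum_apply,
    Pi.add_apply, Pi.smul_apply, smul_eq_mul, mul_comm (u.1.2 _)]
  ring

lemma pairE_adjS (S : EE n → EE n →L[ℝ] EE n) (α : EE n → EE n) (e u : EE n) :
    pairE u (adjS (fun e => S e) α e) = pairE (S e u) (α e) := by
  let pairα : EE n →ₗ[ℝ] ℝ :=
    { toFun := fun v => pairE v (α e)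
      map_add' := fun v w => by simp only [pairE]; simp [add_mul, Finset.sum_add_distrib]; ring
      map_smul' := fun c v => by simp only [pairE]; simp [mul_add, Finset.mul_sum, mul_assoc] }
  exact (map_eq_smul_edt_add_sum (pairα ∘ₗ (S e : EE n →ₗ[ℝ] EE n)) u).symm

lemma fderiv_snd_apply {V : Type*} [NormedAddCommGroup V] [NormedSpace ℝ V] {F : V → EE n}
    {x : V} (hF : DifferentiableAt ℝ F x) (i : Fin n) (a : V) :
    fderiv ℝ (fun y => (F y).2 i) x a = (fderiv ℝ F x a).2 i := by
  rw [fderiv_apply hF.snd i, fderiv.snd hF]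
  rfl

lemma fderiv_clm_apply_const {V W : Type*} [NormedAddCommGroup V] [NormedSpace ℝ V]
    [NormedAddCommGroup W] [NormedSpace ℝ W] {S : V → V →L[ℝ] W} {x : V}
    (hS : DifferentiableAt ℝ S x) (v a : V) :
    fderiv ℝ (fun y => S y v) x a = fderiv ℝ S x a v := by
  rw [fderiv_clm_apply hS (differentiableAt_const v)]
  simp

lemma fderiv_FX_apply {X : EE n → EE n} {m : MM n} (hX : DifferentiableAt ℝ X m.1) (v : MM n) :
    fderiv ℝ (FX X) m v = fibrePair v.2 (X m.1) + fibrePair m.2 (fderiv ℝ X m.1 v.1) := by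
  have hXm : DifferentiableAt ℝ (fun z : MM n => X z.1) m := hX.comp m differentiableAt_fst
  have hp : ∀ i, DifferentiableAt ℝ (fun z : MM n => z.2 i) m := fun i => by fun_prop
  have hXi : ∀ i, DifferentiableAt ℝ (fun z : MM n => (X z.1).2 i) m :=
    differentiableAt_pi.1 hXm.snd
  have hFX : HasFDerivAt (FX X) _ m :=
    HasFDerivAt.fun_sum fun i _ => (hp i).hasFDerivAt.fun_mul (hXi i).hasFDerivAt
  rw [hFX.fderiv]
  have hfst : fderiv ℝ (fun z : MM n => X z.1) m v = fderiv ℝ X m.1 v.1 := by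
    rw [fderiv_fun_comp m hX differentiableAt_fst, fderiv_fst]
    rfl
  have hsnd : ∀ i, fderiv ℝ (fun z : MM n => z.2 i) m v = v.2 i := fun i => by
    rw [fderiv_apply (Φ := Prod.snd) differentiableAt_snd i, fderiv_snd]
    rfl
  simp [fderiv_snd_apply hXm, hfst, hsnd, Finset.sum_add_distrib, mul_comm, add_comm]

lemma fderiv_snd_clm_apply_const (S : EE n → EE n →L[ℝ] EE n) {e : EE n}
    (hS : DifferentiableAt ℝ S e) (v a : EE n) (i : Fin n) :
    fderiv ℝ (fun x => (S x v).2 i) e a = (fderiv ℝ S e a v).2 i := by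
  rw [fderiv_snd_apply (hS.clm_apply (differentiableAt_const v)), fderiv_clm_apply_const hS]

lemma fderiv_Rij (S : EE n → EE n →L[ℝ] EE n) {e : EE n} (hS : DifferentiableAt ℝ S e)
    (i j : Fin n) (a : EE n) :
    fderiv ℝ (Rij (fun e => S e) i j) e a = (fderiv ℝ S e a (eqv j)).2 i :=
  fderiv_snd_clm_apply_const S hS (eqv j) a i

lemma fderiv_Ri0 (S : EE n → EE n →L[ℝ] EE n) {e : EE n} (hS : DifferentiableAt ℝ S e)
    (i : Fin n) (a : EE n) :
    fderiv ℝ (Ri0 (fun e => S e) i) e a = (fderiv ℝ S e a edt).2 i :=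
  fderiv_snd_clm_apply_const S hS edt a i

lemma tlift_snd (S : EE n → EE n →L[ℝ] EE n) {m : MM n} (hS : DifferentiableAt ℝ S m.1)
    (u : MM n) (j : Fin n) :
    (tlift (fun e => S e) m u).2 j = fibrePair u.2 (S m.1 (eqv j))
      + fibrePair m.2 (fderiv ℝ S m.1 u.1 (eqv j) - fderiv ℝ S m.1 (eqv j) u.1) := by
  set D := fderiv ℝ S m.1
  let ψ : EE n →L[ℝ] ℝ := (fibrePair m.2).comp (D.flip (eqv j) - D (eqv j))
  have hψ : ψ u.1 = u.1.1 • ψ edt + ∑ k, u.1.2 k • ψ (eqv k) := map_eq_smul_edt_add_sum ψ u.1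
  change _ = _ + ψ u.1
  rw [hψ]
  simp only [tlift, fderiv_Rij S hS, fderiv_Ri0 S hS]
  simp [ψ, D, Rij, mul_sub, Finset.sum_sub_distrib, mul_comm]
  ring

lemma fibrePair_tlift_snd (S : EE n → EE n →L[ℝ] EE n) {m : MM n} (hS : DifferentiableAt ℝ S m.1)
    (u : MM n) {z : EE n} (hz : z.1 = 0) :
    fibrePair (tlift (fun e => S e) m u).2 z = fibrePair u.2 (S m.1 z)
      + fibrePair m.2 (fderiv ℝ S m.1 u.1 z - fderiv ℝ S m.1 z u.1) := by
  set D := fderiv ℝ S m.1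
  let χ : EE n →L[ℝ] ℝ :=
    (fibrePair u.2).comp (S m.1) + (fibrePair m.2).comp (D u.1 - D.flip u.1)
  change _ = χ z
  rw [map_eq_smul_edt_add_sum χ z, hz, zero_smul, zero_add, fibrePair_apply]
  simp only [tlift_snd S hS, smul_eq_mul, mul_comm (z.2 _)]
  rfl

lemma pairM_hliftC (Q : EE n → EE n → EE n) (L : EE n →L[ℝ] EE n) {m : MM n}
    (hQ : ∀ v, Q m.1 v = L v) (u : MM n) :
    pairM u (hliftC Q m) = fibrePair m.2 (L u.1) := by
  have h := map_eq_smul_edt_add_sum ((fibrePair m.2).comp L) u.1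
  simp only [ContinuousLinearMap.comp_apply] at h
  rw [h]
  simp [pairM, pairE, hliftC, hQ]

lemma lieDerT_apply (X : EE n → EE n) (S : EE n → EE n →L[ℝ] EE n) {e : EE n}
    (hS : DifferentiableAt ℝ S e) (u : EE n) :
    lieDerT X (fun e => S e) e u
      = (fderiv ℝ S e (X e) - (fderiv ℝ X e).comp (S e) + (S e).comp (fderiv ℝ X e)) u := by
  simp [lieDerT, fderiv_clm_apply_const hS]

end CompleteLift

theorem statement13_general {n : ℕ} (R : EE n → EE n → EE n)
    (hRl : ∀ e, IsLinearMap ℝ (R e)) (hRv : ∀ e u, (R e u).1 = 0)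
    (hRs : ∀ u, ContDiff ℝ (⊤ : ℕ∞) (fun e => R e u))
    (α X : EE n → EE n)
    (hX : ContDiff ℝ (⊤ : ℕ∞) X) (hXv : ∀ e, (X e).1 = 0) :
    (∀ m u : MM n, pairE (tlift R m u).1 (α m.1) = pairE u.1 (adjS R α m.1)) ∧
    (∀ m u : MM n, fderiv ℝ (FX X) m (tlift R m u)
        = fderiv ℝ (FX (fun e => R e (X e))) m u - pairM u (hliftC (lieDerT X R) m)) := by
  obtain ⟨S, rfl⟩ : ∃ S : EE n → EE n →L[ℝ] EE n, R = fun e => ⇑(S e) :=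
    ⟨fun e => (hRl e).mk'.toContinuousLinearMap, rfl⟩
  refine ⟨fun m u => by rw [tlift_fst S m u (hRv m.1), pairE_adjS], fun m u => ?_⟩
  have hS : Differentiable ℝ S :=
    (contDiff_clm_apply_iff.2 hRs).differentiable (by simp)
  have hXd : Differentiable ℝ X := hX.differentiable (by simp)
  rw [fderiv_FX_apply (hXd _), fderiv_FX_apply ((hS _).clm_apply (hXd _)),
    tlift_fst S m u (hRv m.1), fibrePair_tlift_snd S (hS _) u (hXv _),
    fderiv_clm_apply (hS _) (hXd _), pairM_hliftC _ _ (lieDerT_apply X S (hS _))]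
  simp only [add_apply, sub_apply, ContinuousLinearMap.comp_apply, ContinuousLinearMap.flip_apply,
    map_add, map_sub]
  ring

/-- The adjoint action (on 1-forms) of the complete lift `R̃`
satisfies `R̃(π*α) = π*(R(α))` for all 1-forms `α` on `E`, and
`R̃(dF_X) = dF_{R(X)} − (L_X R)^h` for all vertical `X` on `E`, where `(·)^h`
is the horizontal lift of a (1,1) tensor.  (The adjoint action of a (1,1) tensor
`T` on a 1-form `σ` is characterized by `⟨u, T(σ)⟩ = ⟨T(u), σ⟩`.) -/
theorem statement13 {n : ℕ} (R : EE n → EE n → EE n)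
    (hRl : ∀ e, IsLinearMap ℝ (R e)) (hRv : ∀ e u, (R e u).1 = 0)
    (hRs : ∀ u, ContDiff ℝ (⊤ : ℕ∞) (fun e => R e u))
    (α X : EE n → EE n) (hα : ContDiff ℝ (⊤ : ℕ∞) α)
    (hX : ContDiff ℝ (⊤ : ℕ∞) X) (hXv : ∀ e, (X e).1 = 0) :
    (∀ m u : MM n, pairE (tlift R m u).1 (α m.1) = pairE u.1 (adjS R α m.1)) ∧
    (∀ m u : MM n, fderiv ℝ (FX X) m (tlift R m u)
        = fderiv ℝ (FX (fun e => R e (X e))) m u - pairM u (hliftC (lieDerT X R) m)) :=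
  statement13_general R hRl hRv hRs α X hX hXv
end
end

section
/- The square of the complete lift satisfies R̃²(α^v) = (R²(α))^v for 1-forms α on E, and R̃²(X̃) = (R²(X))~ + (L_X R²)^v + (i_X N_R)^v for X vertical or with ⟨X,dt⟩=1, where N_R is the Nijenhuis torsion of R and (i_X N_R)(Y) = N_R(X,Y). -/
noncomputable section

open scoped BigOperators

/-! Rather than expanding `R̃²` in coordinates, apply the two characterizations of the complete
lift twice. Besides `R̃(α^v) = (Rα)^v`, the coordinate formula gives `R̃(X̃) = (RX)~ + (L_X R)^v`
and `R̃(S^v) = (S ∘ R)^v`. Since `RX` is again vertical,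
`R̃²(X̃) = (R²X)~ + (L_{RX} R)^v + ((L_X R) ∘ R)^v`, and the Leibniz rule for `L_X (R²)`
together with `i_X N_R = L_{RX} R - R ∘ L_X R` identifies the last two terms with
`(L_X R²)^v + (i_X N_R)^v`. A smooth pointwise-linear `R` is a smooth family of continuous linear
maps, so its derivatives are those of that family. -/

namespace CompleteLift

variable {n : ℕ}

theorem eq_smul_edt_add_sum (v : EE n) : v = v.1 • (edt : EE n) + ∑ k, v.2 k • eqv k := by
  refine Prod.ext ?_ (funext fun l => ?_)
  · simp [edt, eqv, Prod.fst_sum]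
  · simp [edt, eqv, Prod.snd_sum, Finset.sum_apply, Pi.single_apply]

theorem apply_snd_eq_sum {A : EE n → EE n} (hA : IsLinearMap ℝ A) (u : EE n) (i : Fin n) :
    (A u).2 i = u.1 * (A edt).2 i + ∑ k, u.2 k * (A (eqv k)).2 i := by
  conv_lhs => rw [← hA.mk'_apply, eq_smul_edt_add_sum u, map_add, map_smul, map_sum]
  simp only [Prod.snd_add, Prod.smul_snd, Prod.snd_sum, Pi.add_apply, Pi.smul_apply,
    Finset.sum_apply, smul_eq_mul, map_smul, IsLinearMap.mk'_apply]

/-- `pairV v p` pairs the `qⁱ`-components of a tangent vector on `E` with the fibre coordinates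
`pᵢ` of a point of `J¹τ*`. -/
def pairV (v : EE n) (p : Fin n → ℝ) : ℝ := ∑ i, v.2 i * p i

@[simp] theorem pairV_add (v w : EE n) (p : Fin n → ℝ) :
    pairV (v + w) p = pairV v p + pairV w p := by
  simp [pairV, add_mul, Finset.sum_add_distrib]

@[simp] theorem pairV_sub (v w : EE n) (p : Fin n → ℝ) :
    pairV (v - w) p = pairV v p - pairV w p := by
  simp [pairV, sub_mul, Finset.sum_sub_distrib]

@[simp] theorem pairV_neg_right (v : EE n) (p : Fin n → ℝ) :
    pairV v (fun i => -p i) = -pairV v p := by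
  simp [pairV]

theorem pairE_of_fst_eq_zero {v : EE n} (hv : v.1 = 0) (a : EE n) : pairE v a = pairV v a.2 := by
  simp [pairE, pairV, hv]

theorem pairV_apply_eq_sum {A : EE n → EE n} (hA : IsLinearMap ℝ A) (u : EE n)
    (p : Fin n → ℝ) :
    pairV (A u) p = u.1 * pairV (A edt) p + ∑ k, u.2 k * pairV (A (eqv k)) p := by
  unfold pairV
  rw [Finset.sum_congr rfl fun i _ => congrArg (· * p i) (apply_snd_eq_sum hA u i)]
  simp only [add_mul, Finset.sum_add_distrib, Finset.mul_sum, Finset.sum_mul]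
  rw [Finset.sum_comm]
  exact congrArg₂ _ (Finset.sum_congr rfl fun _ _ => by ring)
    (Finset.sum_congr rfl fun _ _ => Finset.sum_congr rfl fun _ _ => by ring)

/-- The fibre part of `S̃` is the transpose of `S`: this identity moves it across the pairing. -/
theorem pairV_transpose {A : EE n → EE n} (hA : IsLinearMap ℝ A) {v : EE n}
    (hv : v.1 = 0) (p : Fin n → ℝ) :
    pairV v (fun k => pairV (A (eqv k)) p) = pairV (A v) p := by
  rw [pairV_apply_eq_sum hA, hv, zero_mul, zero_add]
  rfl

theorem vlift11_eq (S : EE n → EE n → EE n) (m : MM n) :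
    vlift11 S m = ((0, 0), fun j => pairV (S m.1 (eqv j)) m.2) := by
  simp only [vlift11, pairV, mul_comm]

theorem vlift11_add (S T : EE n → EE n → EE n) (m : MM n) :
    vlift11 S m + vlift11 T m = vlift11 (fun e u => S e u + T e u) m := by
  simp only [vlift11_eq, pairV_add, Prod.mk_add_mk, add_zero]
  rfl

theorem tlift_vertical (S : EE n → EE n → EE n) (m : MM n) (w : Fin n → ℝ) :
    tlift S m ((0, 0), w) = ((0, 0), fun j => pairV (S m.1 (eqv j)) w) := by
  simp only [tlift, Rij, pairV, Pi.zero_apply, mul_zero,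
    Finset.sum_const_zero, add_zero]
  rfl

theorem tlift_vlift11 {R S : EE n → EE n → EE n} {m : MM n} (hR : ∀ u, (R m.1 u).1 = 0)
    (hS : IsLinearMap ℝ (S m.1)) :
    tlift R m (vlift11 S m) = vlift11 (fun e u => S e (R e u)) m := by
  rw [vlift11_eq, tlift_vertical, vlift11_eq]
  exact congrArg _ (funext fun j => pairV_transpose hS (hR _) _)

theorem tlift_add (S : EE n → EE n → EE n) (m u v : MM n) :
    tlift S m (u + v) = tlift S m u + tlift S m v := by
  refine Prod.ext (Prod.ext (by simp [tlift]) (funext fun i => ?_)) (funext fun j => ?_)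
  · simp only [tlift, Prod.snd_add, Prod.fst_add, Pi.add_apply, mul_add, Finset.sum_add_distrib]
    ring
  · simp only [tlift, Prod.snd_add, Prod.fst_add, Pi.add_apply, mul_add, Finset.sum_add_distrib]
    ring

section Smooth

variable {Rc : EE n → EE n →L[ℝ] EE n} {e : EE n}

theorem fderiv_snd_apply {F : EE n → EE n} (hF : DifferentiableAt ℝ F e) (v : EE n)
    (i : Fin n) : fderiv ℝ (fun y => (F y).2 i) e v = (fderiv ℝ F e v).2 i := by
  have hcomp : (fun y => (F y).2 i)
      = ((ContinuousLinearMap.proj i).comp (ContinuousLinearMap.snd ℝ ℝ (Fin n → ℝ))) ∘ F := rfl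
  rw [hcomp, fderiv_comp e (ContinuousLinearMap.differentiableAt _) hF,
    ContinuousLinearMap.fderiv]
  rfl

theorem fderiv_clm_apply_apply {X : EE n → EE n} (hRc : DifferentiableAt ℝ Rc e)
    (hX : DifferentiableAt ℝ X e) (v : EE n) :
    fderiv ℝ (fun y => Rc y (X y)) e v = fderiv ℝ Rc e v (X e) + Rc e (fderiv ℝ X e v) := by
  rw [fderiv_clm_apply hRc hX]
  simp [add_comm]

theorem fderiv_clm_apply_const (hRc : DifferentiableAt ℝ Rc e) (u v : EE n) :
    fderiv ℝ (fun y => Rc y u) e v = fderiv ℝ Rc e v u := by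
  simpa using fderiv_clm_apply_apply hRc (differentiableAt_const u) v

theorem tlift_eq {m : MM n} (hRv : ∀ u, (Rc m.1 u).1 = 0) (hRc : DifferentiableAt ℝ Rc m.1)
    (u : MM n) :
    tlift (fun e => ⇑(Rc e)) m u = (Rc m.1 u.1, fun j => pairV (Rc m.1 (eqv j)) u.2
      + pairV (fderiv ℝ Rc m.1 u.1 (eqv j) - fderiv ℝ Rc m.1 (eqv j) u.1) m.2) := by
  have hd : ∀ (w v : EE n) (i : Fin n),
      fderiv ℝ (fun y => (Rc y w).2 i) m.1 v = (fderiv ℝ Rc m.1 v w).2 i := fun w v i => by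
    rw [fderiv_snd_apply (hRc.clm_apply (differentiableAt_const w)), fderiv_clm_apply_const hRc]
  have hRij : ∀ i k v, fderiv ℝ (Rij (fun e => ⇑(Rc e)) i k) m.1 v
      = (fderiv ℝ Rc m.1 v (eqv k)).2 i := fun i k v => hd _ v i
  have hRi0 : ∀ i v, fderiv ℝ (Ri0 (fun e => ⇑(Rc e)) i) m.1 v
      = (fderiv ℝ Rc m.1 v edt).2 i := fun i v => hd _ v i
  refine Prod.ext (Prod.ext (hRv _).symm (funext fun i => ?_)) (funext fun j => ?_)
  · have hR : IsLinearMap ℝ (Rc m.1) := (Rc m.1).toLinearMap.isLinear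
    simp only [tlift, Rij, Ri0]
    rw [apply_snd_eq_sum hR u.1 i]
    simp only [mul_comm (u.1.2 _), mul_comm u.1.1]
    ring
  · have hlin : IsLinearMap ℝ (fun w => fderiv ℝ Rc m.1 w (eqv j) - fderiv ℝ Rc m.1 (eqv j) w) :=
      ((fderiv ℝ Rc m.1).flip (eqv j) - fderiv ℝ Rc m.1 (eqv j)).toLinearMap.isLinear
    dsimp only
    rw [pairV_apply_eq_sum hlin u.1 m.2]
    simp only [tlift, hRij, hRi0, Rij, pairV, Prod.snd_sub, Pi.sub_apply, mul_comm (m.2 _),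
      mul_comm (u.1.2 _), mul_comm u.1.1]
    ring

theorem clift_eq {X : EE n → EE n} {m : MM n} (hX : DifferentiableAt ℝ X m.1) :
    clift X m = (X m.1, fun i => -pairV (fderiv ℝ X m.1 (eqv i)) m.2) := by
  simp only [clift, pairV, fderiv_snd_apply hX, mul_comm]

theorem lieDerT_eq (hRc : DifferentiableAt ℝ Rc e) (X : EE n → EE n) (u : EE n) :
    lieDerT X (fun e => ⇑(Rc e)) e u
      = fderiv ℝ Rc e (X e) u - fderiv ℝ X e (Rc e u) + Rc e (fderiv ℝ X e u) := by
  simp only [lieDerT, fderiv_clm_apply_const hRc]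

theorem isLinearMap_lieDerT (hRc : DifferentiableAt ℝ Rc e) (X : EE n → EE n) :
    IsLinearMap ℝ (lieDerT X (fun e => ⇑(Rc e)) e) := by
  have h : lieDerT X (fun e => ⇑(Rc e)) e
      = ⇑(fderiv ℝ Rc e (X e) - (fderiv ℝ X e).comp (Rc e) + (Rc e).comp (fderiv ℝ X e)) :=
    funext fun u => by simp [lieDerT_eq hRc]
  rw [h]
  exact LinearMap.isLinear _

theorem tlift_clift {X : EE n → EE n} {m : MM n} (hRv : ∀ u, (Rc m.1 u).1 = 0)
    (hRc : DifferentiableAt ℝ Rc m.1) (hX : DifferentiableAt ℝ X m.1) :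
    tlift (fun e => ⇑(Rc e)) m (clift X m)
      = clift (fun e => Rc e (X e)) m + vlift11 (lieDerT X (fun e => ⇑(Rc e))) m := by
  have hDX : IsLinearMap ℝ (fderiv ℝ X m.1) := (fderiv ℝ X m.1).toLinearMap.isLinear
  rw [tlift_eq hRv hRc, clift_eq hX, clift_eq (hRc.clm_apply hX), vlift11_eq]
  refine Prod.ext (by simp) (funext fun j => ?_)
  dsimp only [Prod.snd_add, Pi.add_apply]
  rw [pairV_neg_right, pairV_transpose hDX (hRv _), fderiv_clm_apply_apply hRc hX, lieDerT_eq hRc]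
  simp only [pairV_add, pairV_sub]
  ring

/-- Combine the Leibniz rule `L_X (R²) = (L_X R) ∘ R + R ∘ L_X R` with
`i_X N_R = L_{RX} R - R ∘ L_X R`. -/
theorem lieDerT_sq_add_nijT {X : EE n → EE n} (hRc : DifferentiableAt ℝ Rc e)
    (hX : DifferentiableAt ℝ X e) (u : EE n) :
    lieDerT X (fun e u => Rc e (Rc e u)) e u + nijT (fun e => ⇑(Rc e)) e (X e) u
      = lieDerT (fun y => Rc y (X y)) (fun e => ⇑(Rc e)) e u
        + lieDerT X (fun e => ⇑(Rc e)) e (Rc e u) := by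
  simp only [lieDerT, nijT, fderiv_clm_apply_apply hRc (hRc.clm_apply (differentiableAt_const u)),
    fderiv_clm_apply_apply hRc hX, fderiv_clm_apply_const hRc, map_add]
  abel

end Smooth

end CompleteLift

open CompleteLift

/-- The square of the complete lift satisfies
`R̃²(α^v) = (R²(α))^v` for 1-forms `α` on `E`, and
`R̃²(X̃) = (R²(X))~ + (L_X R²)^v + (i_X N_R)^v` for `X` vertical or with
`⟨X,dt⟩ = 1`, where `N_R` is the Nijenhuis torsion of `R`. -/
theorem statement16 {n : ℕ} (R : EE n → EE n → EE n)
    (hRl : ∀ e, IsLinearMap ℝ (R e)) (hRv : ∀ e u, (R e u).1 = 0)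
    (hRs : ∀ u, ContDiff ℝ (⊤ : ℕ∞) (fun e => R e u)) :
    (∀ α : EE n → EE n, ContDiff ℝ (⊤ : ℕ∞) α →
      ∀ m : MM n, tlift R m (tlift R m (vlift1 α m))
        = vlift1 (adjS (fun e u => R e (R e u)) α) m) ∧
    (∀ X : EE n → EE n, ContDiff ℝ (⊤ : ℕ∞) X →
      ((∀ e, (X e).1 = 0) ∨ (∀ e, (X e).1 = 1)) →
      ∀ m : MM n, tlift R m (tlift R m (clift X m))
        = clift (fun e => R e (R e (X e))) m
          + vlift11 (lieDerT X (fun e u => R e (R e u))) m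
          + vlift11 (fun e u => nijT R e (X e) u) m) := by
  obtain ⟨Rc, rfl⟩ : ∃ Rc : EE n → EE n →L[ℝ] EE n, R = fun e => ⇑(Rc e) :=
    ⟨fun e => LinearMap.toContinuousLinearMap ((hRl e).mk' (R e)), rfl⟩
  have hRc : Differentiable ℝ Rc := (contDiff_clm_apply_iff.mpr hRs).differentiable (by simp)
  refine ⟨fun α _ m => ?_, fun X hX _ m => ?_⟩
  · rw [vlift1, vlift1, tlift_vertical, tlift_vertical]
    refine congrArg _ (funext fun j => ?_)
    rw [pairV_transpose (hRl m.1) (hRv _ _)]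
    exact (pairE_of_fst_eq_zero (hRv _ _) _).symm
  · have hXd : Differentiable ℝ X := hX.differentiable (by simp)
    rw [tlift_clift (hRv m.1) (hRc _) (hXd _), tlift_add,
      tlift_clift (hRv m.1) (hRc _) ((hRc _).clm_apply (hXd _)),
      tlift_vlift11 (hRv m.1) (isLinearMap_lieDerT (hRc _) X), add_assoc, add_assoc,
      vlift11_add, vlift11_add]
    congr 2
    funext e u
    exact (lieDerT_sq_add_nijT (hRc e) (hXd e) u).symm
end
end

section
/- The canonical Poisson map P on J¹τ*, corresponding to Λ = ∂/∂q^i ∧ ∂/∂p_i, satisfies P(π*α) = α^v for 1-forms α on E, P(dF_X) = −X̃ for vertical X on E, and P(R^h) = R^v for (1,1) tensors R on E with R(dt)=0. Moreover, the complete lift R̃ commutes with P: P ∘ R̃ = R̃ ∘ P as maps from 1-forms to vector fields on J¹τ*. -/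
noncomputable section

open scoped BigOperators

/-! The Poisson map acts pointwise on covectors by `(a_t, a_q, a_p) ↦ (0, -a_p, a_q)`, so the
first three identities are comparisons of components (for `dF_X` after differentiating
`F_X = pᵢ Xⁱ`). For `P ∘ R̃ = R̃ ∘ P` the two `Rⁱ_j`-blocks of `R̃` are transposes of each other,
and its `∂/∂p_j ⊗ dq^k`-block `pᵢ(∂Rⁱ_j/∂q^k − ∂Rⁱ_k/∂q^j)` is skew in `j, k`, which is exactly
what the sign of `P` requires. -/

theorem Pmap_pullback {n : ℕ} (α : EE n → EE n) :
    Pmap (fun x : MM n => (α x.1, (0 : Fin n → ℝ))) = vlift1 α := by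
  funext m
  simp only [Pmap, vlift1, Pi.zero_apply, neg_zero]
  rfl

theorem Pmap_hliftC {n : ℕ} (S : EE n → EE n → EE n) : Pmap (hliftC S) = vlift11 S := by
  funext m
  simp only [Pmap, hliftC, vlift11, Pi.zero_apply, neg_zero]
  rfl

theorem fderiv_FX {n : ℕ} {X : EE n → EE n} (hX : Differentiable ℝ X) (m v : MM n) :
    fderiv ℝ (FX X) m v =
      ∑ i, (v.2 i * (X m.1).2 i + m.2 i * fderiv ℝ (fun e => (X e).2 i) m.1 v.1) := by
  have hXi (i : Fin n) : Differentiable ℝ fun e => (X e).2 i :=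
    differentiable_pi.mp hX.snd i
  have hFX : FX X = fun m : MM n => ∑ i, m.2 i * (X m.1).2 i := rfl
  rw [hFX, fderiv_fun_sum fun i _ => by fun_prop]
  simp only [FunLike.coe_sum, Finset.sum_apply]
  refine Finset.sum_congr rfl fun i _ => ?_
  have hp : HasFDerivAt (fun m : MM n => m.2 i)
      ((ContinuousLinearMap.proj i).comp (ContinuousLinearMap.snd ℝ (EE n) (Fin n → ℝ))) m :=
    ((ContinuousLinearMap.proj i).comp (ContinuousLinearMap.snd ℝ (EE n) (Fin n → ℝ))).hasFDerivAt
  have hq : HasFDerivAt (fun m : MM n => (X m.1).2 i)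
      ((fderiv ℝ (fun e => (X e).2 i) m.1).comp (ContinuousLinearMap.fst ℝ (EE n) (Fin n → ℝ))) m :=
    (hXi i m.1).hasFDerivAt.comp m hasFDerivAt_fst
  rw [(hp.fun_mul hq).fderiv]
  simp only [add_apply, smul_apply, smul_eq_mul, ContinuousLinearMap.comp_apply,
    ContinuousLinearMap.proj_apply, ContinuousLinearMap.coe_fst', ContinuousLinearMap.coe_snd']
  ring

theorem Pmap_dFc {n : ℕ} {X : EE n → EE n} (hX : Differentiable ℝ X) (hXv : ∀ e, (X e).1 = 0) :
    Pmap (dFc X) = - clift X := by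
  funext m
  refine Prod.ext (Prod.ext ?_ (funext fun i => ?_)) (funext fun i => ?_)
  · simp [Pmap, clift, hXv]
  · simp [Pmap, dFc, clift, fderiv_FX hX, Pi.single_apply]
  · simp [Pmap, dFc, clift, fderiv_FX hX, eqv]

theorem tlift_apply_dp {n : ℕ} (S : EE n → EE n → EE n) (m : MM n) (i : Fin n) :
    tlift S m (0, Pi.single i 1) = ((0, 0), fun j => Rij S i j m.1) := by
  simp [tlift, Pi.single_apply, Pi.zero_def]

theorem tlift_apply_dq {n : ℕ} (S : EE n → EE n → EE n) (m : MM n) (k : Fin n) :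
    tlift S m (eqv k, 0) = ((0, fun i => Rij S i k m.1), fun j => ∑ i, m.2 i *
      (fderiv ℝ (Rij S i j) m.1 (eqv k) - fderiv ℝ (Rij S i k) m.1 (eqv j))) := by
  simp [tlift, eqv, Pi.single_apply]

theorem Pmap_adjM_tlift {n : ℕ} (S : EE n → EE n → EE n) (σ : MM n → MM n) :
    Pmap (adjM (tlift S) σ) = fun m => tlift S m (Pmap σ m) := by
  funext m
  refine Prod.ext (Prod.ext rfl (funext fun i => ?_)) (funext fun j => ?_)
  · simp only [Pmap, adjM, tlift_apply_dp]
    simp [pairM, pairE, tlift]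
  · simp only [Pmap, adjM, tlift_apply_dq]
    simp only [pairM, pairE, tlift, zero_mul, zero_add, mul_zero, add_zero, add_right_inj]
    refine Finset.sum_congr rfl fun k _ => ?_
    rw [mul_neg, ← neg_mul, ← Finset.sum_neg_distrib]
    simp only [← mul_neg, neg_sub]

theorem statement18_general {n : ℕ} (R : EE n → EE n → EE n) :
    (∀ α : EE n → EE n, ∀ m : MM n,
      Pmap (fun x : MM n => (α x.1, (0 : Fin n → ℝ))) m = vlift1 α m) ∧
    (∀ X : EE n → EE n, ContDiff ℝ (⊤ : ℕ∞) X → (∀ e, (X e).1 = 0) →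
      ∀ m : MM n, Pmap (dFc X) m = - clift X m) ∧
    (∀ m : MM n, Pmap (hliftC R) m = vlift11 R m) ∧
    (∀ σ : MM n → MM n, ∀ m : MM n,
      Pmap (adjM (tlift R) σ) m = tlift R m (Pmap σ m)) :=
  ⟨fun α => congrFun (Pmap_pullback α),
   fun _ hX hXv => congrFun (Pmap_dFc (hX.differentiable (by simp)) hXv),
   congrFun (Pmap_hliftC R),
   fun σ => congrFun (Pmap_adjM_tlift R σ)⟩

/-- The canonical Poisson map `P` on `J¹τ*` (of `Λ = ∂/∂qⁱ ∧ ∂/∂pᵢ`)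
satisfies `P(π*α) = α^v` for 1-forms `α` on `E`, `P(dF_X) = −X̃` for vertical `X`
on `E`, and `P(R^h) = R^v` for (1,1) tensors `R` on `E` with `R(dt) = 0`.
Moreover the complete lift `R̃` commutes with `P`:  `P ∘ R̃ = R̃ ∘ P` as maps
from 1-forms to vector fields on `J¹τ*`. -/
theorem statement18 {n : ℕ} (R : EE n → EE n → EE n)
    (hRl : ∀ e, IsLinearMap ℝ (R e)) (hRv : ∀ e u, (R e u).1 = 0)
    (hRs : ∀ u, ContDiff ℝ (⊤ : ℕ∞) (fun e => R e u)) :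
    (∀ α : EE n → EE n, ∀ m : MM n,
      Pmap (fun x : MM n => (α x.1, (0 : Fin n → ℝ))) m = vlift1 α m) ∧
    (∀ X : EE n → EE n, ContDiff ℝ (⊤ : ℕ∞) X → (∀ e, (X e).1 = 0) →
      ∀ m : MM n, Pmap (dFc X) m = - clift X m) ∧
    (∀ m : MM n, Pmap (hliftC R) m = vlift11 R m) ∧
    (∀ σ : MM n → MM n, ∀ m : MM n,
      Pmap (adjM (tlift R) σ) m = tlift R m (Pmap σ m)) :=
  statement18_general R
end
end
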